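/- Let n ≥ 2 be an integer, s ∈ (0,1), Ω ⊂ ℝⁿ a bounded open set with Lipschitz boundary. For every (A,q) ∈ 𝒫₀ with A ∈ L²(ℝ^{2n}) and A not a.e. zero, there exists (A',q') ∈ 𝒫₀ with A' ≠ A (as L² functions) such that (A,q) ∼ (A',q'). In other words, the fractional magnetic Schrödinger equation has the gauge ∼. -/

import Mathlib

/- Common framework for the formalization of
   "An inverse problem for the fractional Schrödinger equation in a magnetic field"
   (G. Covi). -/

open MeasureTheory Real Complex
open scoped ENNReal NNReal BigOperators Classical

noncomputable section

/-- Points of `ℝⁿ`. -/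
abbrev Rn (n : ℕ) := EuclideanSpace ℝ (Fin n)

/-- Vectors of `ℂⁿ`. -/
abbrev Cn (n : ℕ) := EuclideanSpace ℂ (Fin n)

/-- Embedding of a real vector into `ℂⁿ`. -/
def toC {n : ℕ} (x : Rn n) : Cn n := WithLp.toLp 2 (fun i => (x i : ℂ))

/-- Bilinear dot product of a complex vector with a real vector. -/
def cdotR {n : ℕ} (v : Cn n) (w : Rn n) : ℂ := ∑ i, v i * (w i : ℂ)

/-- Bilinear (non-hermitian) dot product of two complex vectors. -/
def cdot {n : ℕ} (v w : Cn n) : ℂ := ∑ i, v i * w i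

/-- Symmetric part `A_s(x,y) = (A(x,y) + A(y,x))/2`. -/
def symPart {n : ℕ} (A : Rn n × Rn n → Cn n) : Rn n × Rn n → Cn n :=
  fun p => ((2 : ℂ)⁻¹) • (A p + A (p.2, p.1))

/-- Antisymmetric part `A_a = A - A_s`. -/
def antiPart {n : ℕ} (A : Rn n × Rn n → Cn n) : Rn n × Rn n → Cn n :=
  fun p => A p - symPart A p

/-- Parallel part `A_∥(x,y) = (A(x,y)·(x-y)/|x-y|²)(x-y)` for `x ≠ y`, `A` on the diagonal. -/
def parPart {n : ℕ} (A : Rn n × Rn n → Cn n) : Rn n × Rn n → Cn n :=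
  fun p => if p.1 = p.2 then A p
    else ((cdotR (A p) (p.1 - p.2)) / ((‖p.1 - p.2‖ : ℂ) ^ 2)) • toC (p.1 - p.2)

/-- Perpendicular part `A_⊥ = A - A_∥`. -/
def perpPart {n : ℕ} (A : Rn n × Rn n → Cn n) : Rn n × Rn n → Cn n :=
  fun p => A p - parPart A p

/-- `𝒥₁A(x) = (∫ |A(y,x)|² dy)^{1/2}`. -/
def J1 {n : ℕ} (A : Rn n × Rn n → Cn n) (x : Rn n) : ℝ :=
  Real.sqrt (∫ y : Rn n, ‖A (y, x)‖ ^ 2)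

/-- `𝒥₂A(x) = (∫ |A(x,y)|² dy)^{1/2}`. -/
def J2 {n : ℕ} (A : Rn n × Rn n → Cn n) (x : Rn n) : ℝ :=
  Real.sqrt (∫ y : Rn n, ‖A (x, y)‖ ^ 2)

/-- The normalizing constant `𝒞_{n,s}` of the fractional Laplacian `(-Δ)^s`. -/
def Cns (n : ℕ) (s : ℝ) : ℝ :=
  (4 : ℝ) ^ s * Real.Gamma ((n : ℝ) / 2 + s) / (Real.pi ^ ((n : ℝ) / 2) * |Real.Gamma (-s)|)

/-- `α(x,y) = (𝒞_{n,s}^{1/2}/√2) (y-x)/|y-x|^{n/2+s+1}` (as a complex vector). -/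
def alphaK {n : ℕ} (s : ℝ) (p : Rn n × Rn n) : Cn n :=
  ((((Real.sqrt (Cns n s) / Real.sqrt 2) * ‖p.2 - p.1‖ ^ (-((n : ℝ) / 2 + s + 1))) : ℝ) : ℂ) •
    toC (p.2 - p.1)

/-- The fractional gradient `∇ˢu(x,y) = (u(x) - u(y)) α(x,y)`. -/
def gradS {n : ℕ} (s : ℝ) (u : Rn n → ℂ) (p : Rn n × Rn n) : Cn n :=
  (u p.1 - u p.2) • alphaK s p

/-- The magnetic fractional gradient `∇ˢ_A u(x,y) = ∇ˢu(x,y) + A(x,y) u(x)`. -/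
def gradA {n : ℕ} (s : ℝ) (A : Rn n × Rn n → Cn n) (u : Rn n → ℂ) (p : Rn n × Rn n) : Cn n :=
  gradS s u p + u p.1 • A p

/-- Gagliardo `H^s(ℝⁿ)` norm squared (equivalent to the Bessel-potential norm for `s ∈ (0,1)`). -/
def gagNormSq {n : ℕ} (s : ℝ) (u : Rn n → ℂ) : ℝ≥0∞ :=
  (∫⁻ x : Rn n, (‖u x‖₊ : ℝ≥0∞) ^ 2) +
    ∫⁻ p : Rn n × Rn n, (‖u p.1 - u p.2‖₊ : ℝ≥0∞) ^ 2 / (edist p.1 p.2) ^ ((n : ℝ) + 2 * s)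

/-- Membership in `H^s(ℝⁿ)`, `s ∈ (0,1)`. -/
def MemHs {n : ℕ} (s : ℝ) (u : Rn n → ℂ) : Prop :=
  AEStronglyMeasurable u volume ∧ gagNormSq s u < ⊤

/-- The `H^s(ℝⁿ)` norm. -/
def HsNorm {n : ℕ} (s : ℝ) (u : Rn n → ℂ) : ℝ :=
  Real.sqrt (gagNormSq s u).toReal

/-- `f ∈ C_c^∞(W)`. -/
def IsTestOn {n : ℕ} (W : Set (Rn n)) (f : Rn n → ℂ) : Prop :=
  ContDiff ℝ (⊤ : ℕ∞) f ∧ HasCompactSupport f ∧ tsupport f ⊆ W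

/-- Membership in `H̃^s(Ω)`, the closure of `C_c^∞(Ω)` in `H^s(ℝⁿ)`. -/
def MemTildeHs {n : ℕ} (s : ℝ) (Ω : Set (Rn n)) (u : Rn n → ℂ) : Prop :=
  MemHs s u ∧ ∀ ε > (0 : ℝ), ∃ φ : Rn n → ℂ, IsTestOn Ω φ ∧
    HsNorm s (fun x => u x - φ x) < ε

/-- Fourier transform on `ℝⁿ`, convention `ℱu(ξ) = ∫ e^{-ix·ξ} u(x) dx`. -/
def FT1 {n : ℕ} (u : Rn n → ℂ) (ξ : Rn n) : ℂ :=
  ∫ x : Rn n, Complex.exp (-(Complex.I * ((inner ℝ x ξ : ℝ) : ℂ))) * u x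

/-- Fourier transform on `ℝ^{2n}` of a `ℂⁿ`-valued function. -/
def FT2v {n : ℕ} (F : Rn n × Rn n → Cn n) (ζ : Rn n × Rn n) : Cn n :=
  ∫ p : Rn n × Rn n,
    Complex.exp (-(Complex.I * (((inner ℝ p.1 ζ.1 : ℝ) + (inner ℝ p.2 ζ.2 : ℝ) : ℝ) : ℂ))) • F p

/-- Membership in the Bessel-potential space `H^t(ℝ^{2n}, ℂⁿ)`, `t ≥ 0` (Fourier side). -/
def MemH2Fourier {n : ℕ} (t : ℝ) (F : Rn n × Rn n → Cn n) : Prop :=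
  MemLp F 2 volume ∧
    (∫⁻ ζ : Rn n × Rn n,
      ENNReal.ofReal ((1 + ‖ζ.1‖ ^ 2 + ‖ζ.2‖ ^ 2) ^ t * ‖FT2v F ζ‖ ^ 2)) < ⊤

/-- The exponent `p = max{2, n/(2s)}`. -/
def pexp (n : ℕ) (s : ℝ) : ℝ := max 2 ((n : ℝ) / (2 * s))

/-- The class `𝒜₀` of vector potentials: properties (p1), (p2), (p3). -/
def MemA0 {n : ℕ} (s : ℝ) (A : Rn n × Rn n → Cn n) : Prop :=
  (MemLp (J1 A) (ENNReal.ofReal (2 * pexp n s)) volume ∧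
    MemLp (J2 A) (ENNReal.ofReal (2 * pexp n s)) volume) ∧
  MemH2Fourier (s * pexp n s - s) (parPart (symPart A)) ∧
  (∀ x y : Rn n, ∃ r : ℝ, 0 ≤ r ∧ cdotR (parPart (antiPart A) (x, y)) (y - x) = (r : ℂ))

/-- The class `𝒫₀` of pairs of potentials: properties (p1)–(p4). -/
def MemP0 {n : ℕ} (s : ℝ) (Ω : Set (Rn n)) (A : Rn n × Rn n → Cn n) (q : Rn n → ℝ) : Prop :=
  MemA0 s A ∧ MemLp q (ENNReal.ofReal (pexp n s)) (volume.restrict Ω)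

/-- The class `𝒫` of pairs of potentials: properties (p1)–(p5). -/
def MemP {n : ℕ} (s : ℝ) (Ω : Set (Rn n)) (A : Rn n × Rn n → Cn n) (q : Rn n → ℝ) : Prop :=
  MemP0 s Ω A q ∧ MemLp A 2 volume ∧ ∀ p : Rn n × Rn n, p ∉ Ω ×ˢ Ω → A p = 0

/-- The bilinear form `B^s_{A,q}[u,v] = ∫∫ ∇ˢ_A u · ∇ˢ_A v dy dx + ∫ q u v dx`. -/
def Bform {n : ℕ} (s : ℝ) (A : Rn n × Rn n → Cn n) (q : Rn n → ℝ) (u v : Rn n → ℂ) : ℂ :=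
  (∫ p : Rn n × Rn n, cdot (gradA s A u p) (gradA s A v p)) +
    ∫ x : Rn n, (q x : ℂ) * u x * v x

/-- The gauge `(A,q) ∼ (A',q')`: `(-Δ)^s_A u + qu = (-Δ)^s_{A'} u + q'u` in `H^{-s}(ℝⁿ)`
for every `u ∈ H^s(ℝⁿ)` (tested against all `v ∈ H^s(ℝⁿ)`). -/
def GaugeSim {n : ℕ} (s : ℝ) (A A' : Rn n × Rn n → Cn n) (q q' : Rn n → ℝ) : Prop :=
  ∀ u v : Rn n → ℂ, MemHs s u → MemHs s v → Bform s A q u v = Bform s A' q' u v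

/-- Pairing of `Q = q + ∫|A|²dy + (∇·)ˢ A_{s∥}` against `w`. -/
def Qpair {n : ℕ} (s : ℝ) (A : Rn n × Rn n → Cn n) (q : Rn n → ℝ) (w : Rn n → ℂ) : ℂ :=
  (∫ x : Rn n, ((q x : ℂ) + (J2 A x : ℂ) ^ 2) * w x) +
    ∫ p : Rn n × Rn n, cdot (parPart (symPart A) p) (gradS s w p)

/-- `σ(x,y) = 1 + (√2/𝒞_{n,s}^{1/2}) |y-x|^{n/2+s} (A_{a∥}(x,y)·(y-x)/|y-x|)`. -/
def sigmaOf {n : ℕ} (s : ℝ) (A : Rn n × Rn n → Cn n) (p : Rn n × Rn n) : ℝ :=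
  1 + (Real.sqrt 2 / Real.sqrt (Cns n s)) * ‖p.2 - p.1‖ ^ ((n : ℝ) / 2 + s) *
    (cdotR (parPart (antiPart A) p) ((‖p.2 - p.1‖)⁻¹ • (p.2 - p.1))).re

/-- A solution operator for the exterior-value problem for FMSE (existence + a.e. uniqueness). -/
def SolOp {n : ℕ} (s : ℝ) (Ω : Set (Rn n)) (A : Rn n × Rn n → Cn n) (q : Rn n → ℝ)
    (sol : (Rn n → ℂ) → Rn n → ℂ) : Prop :=
  ∀ f, MemHs s f →
    (MemHs s (sol f) ∧ MemTildeHs s Ω (fun x => sol f x - f x) ∧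
      ∀ v, MemTildeHs s Ω v → Bform s A q (sol f) v = 0) ∧
    ∀ u, MemHs s u → MemTildeHs s Ω (fun x => u x - f x) →
      (∀ v, MemTildeHs s Ω v → Bform s A q u v = 0) → u =ᵐ[volume] sol f

end

/-! ### Auxiliary lemmas -/

noncomputable section Aux

open MeasureTheory

variable {n : ℕ}

lemma toC_apply (x : Rn n) (i : Fin n) : toC x i = (x i : ℂ) := rfl

lemma cdot_add_left (v w u : Cn n) : cdot (v + w) u = cdot v u + cdot w u := by
  simp [cdot, add_mul, Finset.sum_add_distrib]

lemma cdot_add_right (v w u : Cn n) : cdot u (v + w) = cdot u v + cdot u w := by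
  simp [cdot, mul_add, Finset.sum_add_distrib]

lemma cdot_smul_left (c : ℂ) (v u : Cn n) : cdot (c • v) u = c * cdot v u := by
  simp [cdot, Finset.mul_sum, mul_assoc]

lemma cdot_smul_right (c : ℂ) (v u : Cn n) : cdot u (c • v) = c * cdot u v := by
  simp [cdot, Finset.mul_sum]; ring_nf
  exact Finset.sum_congr rfl fun i _ => by ring

lemma cdot_comm (v w : Cn n) : cdot v w = cdot w v := by
  simp [cdot, mul_comm]

lemma cdot_sub_left (v w u : Cn n) : cdot (v - w) u = cdot v u - cdot w u := by
  simp [cdot, sub_mul, Finset.sum_sub_distrib]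

lemma cdot_sub_right (v w u : Cn n) : cdot u (v - w) = cdot u v - cdot u w := by
  simp [cdot, mul_sub, Finset.sum_sub_distrib]

lemma cdot_zero_left (v : Cn n) : cdot (0 : Cn n) v = 0 := by simp [cdot]

lemma cdot_zero_right (v : Cn n) : cdot v (0 : Cn n) = 0 := by simp [cdot]

lemma cdotR_add_left (v w : Cn n) (r : Rn n) : cdotR (v + w) r = cdotR v r + cdotR w r := by
  simp [cdotR, add_mul, Finset.sum_add_distrib]

lemma cdotR_sub_left (v w : Cn n) (r : Rn n) : cdotR (v - w) r = cdotR v r - cdotR w r := by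
  simp [cdotR, sub_mul, Finset.sum_sub_distrib]

lemma cdotR_smul_left (c : ℂ) (v : Cn n) (r : Rn n) : cdotR (c • v) r = c * cdotR v r := by
  simp [cdotR, Finset.mul_sum, mul_assoc]

lemma cdotR_neg_right (v : Cn n) (r : Rn n) : cdotR v (-r) = -cdotR v r := by
  simp [cdotR, Finset.sum_neg_distrib]

lemma cdotR_zero_left (r : Rn n) : cdotR (0 : Cn n) r = 0 := by simp [cdotR]

lemma cdot_toC_right (v : Cn n) (w : Rn n) : cdot v (toC w) = cdotR v w := by
  simp [cdot, cdotR, toC]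

lemma cdot_toC_left (v : Cn n) (w : Rn n) : cdot (toC w) v = cdotR v w := by
  simp [cdot, cdotR, toC, mul_comm]

lemma cdotR_toC_self (w : Rn n) : cdotR (toC w) w = ((‖w‖ : ℂ)) ^ 2 := by
  have h1 : ‖w‖ ^ 2 = ∑ i, w i * w i := by
    rw [EuclideanSpace.norm_eq, Real.sq_sqrt (by positivity)]
    exact Finset.sum_congr rfl fun i _ => by
      rw [Real.norm_eq_abs, _root_.sq_abs, sq]
  rw [show ((‖w‖ : ℂ)) ^ 2 = ((‖w‖ ^ 2 : ℝ) : ℂ) by push_cast; ring, h1, cdotR]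
  push_cast
  simp [toC]

lemma norm_toC (w : Rn n) : ‖toC w‖ = ‖w‖ := by
  rw [EuclideanSpace.norm_eq, EuclideanSpace.norm_eq]
  congr 1
  exact Finset.sum_congr rfl fun i _ => by simp [toC]

lemma cdotR_eq_inner (v : Cn n) (w : Rn n) : cdotR v w = inner ℂ (toC w) v := by
  rw [PiLp.inner_apply]
  exact Finset.sum_congr rfl fun i _ => by
    simp [cdotR, toC, RCLike.inner_apply, mul_comm]

lemma norm_cdotR_le (v : Cn n) (w : Rn n) : ‖cdotR v w‖ ≤ ‖w‖ * ‖v‖ := by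
  rw [cdotR_eq_inner, ← norm_toC w]
  exact norm_inner_le_norm _ _

/-! ### parPart algebra -/

lemma parPart_diag (A : Rn n × Rn n → Cn n) (x : Rn n) : parPart A (x, x) = A (x, x) := by
  simp [parPart]

lemma cdotR_parPart_sub (A : Rn n × Rn n → Cn n) (p : Rn n × Rn n) :
    cdotR (parPart A p) (p.1 - p.2) = cdotR (A p) (p.1 - p.2) := by
  by_cases h : p.1 = p.2
  · simp [parPart, h, cdotR]
  · have hw : p.1 - p.2 ≠ 0 := sub_ne_zero.mpr h
    have hN : ((‖p.1 - p.2‖ : ℂ)) ^ 2 ≠ 0 := by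
      simp only [ne_eq, pow_eq_zero_iff, OfNat.ofNat_ne_zero, not_false_iff, and_true]
      exact_mod_cast norm_ne_zero_iff.mpr hw
    rw [parPart, if_neg h, cdotR_smul_left, cdotR_toC_self, div_mul_cancel₀ _ hN]

lemma cdotR_parPart_sub' (A : Rn n × Rn n → Cn n) (p : Rn n × Rn n) :
    cdotR (parPart A p) (p.2 - p.1) = cdotR (A p) (p.2 - p.1) := by
  have h := cdotR_parPart_sub A p
  have e : p.2 - p.1 = -(p.1 - p.2) := by abel
  rw [e, cdotR_neg_right, cdotR_neg_right, h]

lemma cdot_parPart_self (A : Rn n × Rn n → Cn n) (p : Rn n × Rn n) :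
    cdot (parPart A p) (parPart A p) = cdot (parPart A p) (A p) := by
  by_cases h : p.1 = p.2
  · rw [parPart, if_pos h]
  · have hw : p.1 - p.2 ≠ 0 := sub_ne_zero.mpr h
    have hN : ((‖p.1 - p.2‖ : ℂ)) ^ 2 ≠ 0 := by
      simp only [ne_eq, pow_eq_zero_iff, OfNat.ofNat_ne_zero, not_false_iff, and_true]
      exact_mod_cast norm_ne_zero_iff.mpr hw
    rw [parPart, if_neg h, cdot_smul_left, cdot_smul_left, cdot_smul_right,
      cdot_toC_left, cdot_toC_left, cdotR_toC_self]
    field_simp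

/-! ### the reflection gauge -/

def reflA (A : Rn n × Rn n → Cn n) : Rn n × Rn n → Cn n :=
  fun p => (2 : ℂ) • parPart A p - A p

lemma reflA_diag (A : Rn n × Rn n → Cn n) (x : Rn n) : reflA A (x, x) = A (x, x) := by
  rw [reflA, parPart_diag, two_smul, add_sub_cancel_right]

lemma cdotR_reflA_sub (A : Rn n × Rn n → Cn n) (p : Rn n × Rn n) :
    cdotR (reflA A p) (p.1 - p.2) = cdotR (A p) (p.1 - p.2) := by
  rw [reflA, cdotR_sub_left, cdotR_smul_left, cdotR_parPart_sub]; ring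

lemma cdotR_reflA_sub' (A : Rn n × Rn n → Cn n) (p : Rn n × Rn n) :
    cdotR (reflA A p) (p.2 - p.1) = cdotR (A p) (p.2 - p.1) := by
  rw [reflA, cdotR_sub_left, cdotR_smul_left, cdotR_parPart_sub']; ring

lemma cdot_reflA_self (A : Rn n × Rn n → Cn n) (p : Rn n × Rn n) :
    cdot (reflA A p) (reflA A p) = cdot (A p) (A p) := by
  rw [reflA, cdot_sub_left, cdot_sub_right, cdot_sub_right, cdot_smul_left, cdot_smul_left,
    cdot_smul_right, cdot_smul_right, cdot_parPart_self]
  have h : cdot (A p) (parPart A p) = cdot (parPart A p) (A p) := cdot_comm _ _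
  rw [h]; ring

lemma norm_reflA (A : Rn n × Rn n → Cn n) (p : Rn n × Rn n) : ‖reflA A p‖ = ‖A p‖ := by
  by_cases h : p.1 = p.2
  · obtain ⟨x, y⟩ := p
    cases h
    rw [reflA_diag]
  · have hw : p.1 - p.2 ≠ 0 := sub_ne_zero.mpr h
    have hR : ‖p.1 - p.2‖ ≠ 0 := norm_ne_zero_iff.mpr hw
    set w := p.1 - p.2 with hwdef
    set d := cdotR (A p) w with hd
    have hP : parPart A p = (d / ((‖w‖ : ℂ)) ^ 2) • toC w := by rw [parPart, if_neg h]
    have hinner : (inner ℂ (parPart A p) (A p) : ℂ) =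
        ((Complex.normSq d / ‖w‖ ^ 2 : ℝ) : ℂ) := by
      rw [hP, inner_smul_left, ← cdotR_eq_inner, ← hd]
      rw [map_div₀]
      have h0 : (starRingEnd ℂ) (((‖w‖ : ℂ)) ^ 2) = ((‖w‖ : ℂ)) ^ 2 := by
        rw [map_pow, Complex.conj_ofReal]
      rw [h0, div_mul_eq_mul_div, mul_comm, Complex.mul_conj]
      push_cast
      ring
    have hnP : ‖parPart A p‖ ^ 2 = Complex.normSq d / ‖w‖ ^ 2 := by
      have hden : ‖(((‖w‖ : ℂ))) ^ 2‖ = ‖w‖ ^ 2 := by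
        rw [norm_pow, Complex.norm_real, norm_norm]
      rw [hP, norm_smul, norm_toC, mul_pow, norm_div, hden, div_pow]
      rw [Complex.sq_norm]
      field_simp
    have hsq : ‖reflA A p‖ ^ 2 = ‖A p‖ ^ 2 := by
      rw [reflA, @norm_sub_sq ℂ _ _ _ _ ((2:ℂ) • parPart A p) (A p), inner_smul_left, hinner,
        norm_smul]
      have h2 : RCLike.re ((starRingEnd ℂ) 2 * ((Complex.normSq d / ‖w‖ ^ 2 : ℝ) : ℂ)) =
          2 * (Complex.normSq d / ‖w‖ ^ 2) := by
        simp
        rw [← Complex.ofReal_pow, ← Complex.ofReal_div, Complex.ofReal_re]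
      have h3 : ‖(2:ℂ)‖ = 2 := by simp
      rw [h2, h3, mul_pow, hnP]
      ring
    have h1 := congrArg Real.sqrt hsq
    rwa [Real.sqrt_sq (norm_nonneg _), Real.sqrt_sq (norm_nonneg _)] at h1


/-! ### integrand identity -/

lemma integrand_eq {s : ℝ} {A A' : Rn n × Rn n → Cn n} {u v : Rn n → ℂ} {p : Rn n × Rn n}
    (h1 : cdotR (A' p) (p.2 - p.1) = cdotR (A p) (p.2 - p.1))
    (h2 : cdot (A' p) (A' p) = cdot (A p) (A p)) :
    cdot (gradA s A' u p) (gradA s A' v p) = cdot (gradA s A u p) (gradA s A v p) := by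
  simp only [gradA, gradS, alphaK, cdot_add_left, cdot_add_right, cdot_smul_left,
    cdot_smul_right, cdot_toC_left, cdot_toC_right, cdotR_add_left, cdotR_smul_left,
    cdotR_toC_self, h1, h2]

/-! ### transfer of the structural parts -/

lemma parPart_eq_of_cdotR {F G : Rn n × Rn n → Cn n}
    (hdiag : ∀ x : Rn n, F (x, x) = G (x, x))
    (hc : ∀ p : Rn n × Rn n, cdotR (F p) (p.1 - p.2) = cdotR (G p) (p.1 - p.2)) :
    parPart F = parPart G := by
  funext p
  by_cases h : p.1 = p.2
  · obtain ⟨x, y⟩ := p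
    cases h
    rw [parPart, parPart, if_pos rfl, if_pos rfl]
    exact hdiag x
  · rw [parPart, parPart, if_neg h, if_neg h, hc]

lemma cdotR_symPart_reflA (A : Rn n × Rn n → Cn n) (p : Rn n × Rn n) :
    cdotR (symPart (reflA A) p) (p.1 - p.2) = cdotR (symPart A p) (p.1 - p.2) := by
  rw [symPart, symPart, cdotR_smul_left, cdotR_smul_left, cdotR_add_left, cdotR_add_left,
    cdotR_reflA_sub A p]
  have e : p.1 - p.2 = ((p.2, p.1) : Rn n × Rn n).2 - ((p.2, p.1) : Rn n × Rn n).1 := rfl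
  rw [e, cdotR_reflA_sub' A (p.2, p.1)]

lemma symPart_reflA_diag (A : Rn n × Rn n → Cn n) (x : Rn n) :
    symPart (reflA A) (x, x) = symPart A (x, x) := by
  rw [symPart, symPart]
  simp only [reflA_diag]

lemma parPart_symPart_reflA (A : Rn n × Rn n → Cn n) :
    parPart (symPart (reflA A)) = parPart (symPart A) :=
  parPart_eq_of_cdotR (symPart_reflA_diag A) (cdotR_symPart_reflA A)

lemma parPart_antiPart_reflA (A : Rn n × Rn n → Cn n) :
    parPart (antiPart (reflA A)) = parPart (antiPart A) := by
  refine parPart_eq_of_cdotR (fun x => ?_) (fun p => ?_)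
  · rw [antiPart, antiPart, reflA_diag, symPart_reflA_diag]
  · rw [antiPart, antiPart, cdotR_sub_left, cdotR_sub_left, cdotR_reflA_sub,
      cdotR_symPart_reflA]

lemma J1_reflA (A : Rn n × Rn n → Cn n) : J1 (reflA A) = J1 A := by
  funext x
  rw [J1, J1]
  congr 1
  refine integral_congr_ae (Filter.Eventually.of_forall fun y => ?_)
  simp only [norm_reflA]

lemma J2_reflA (A : Rn n × Rn n → Cn n) : J2 (reflA A) = J2 A := by
  funext x
  rw [J2, J2]
  congr 1
  refine integral_congr_ae (Filter.Eventually.of_forall fun y => ?_)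
  simp only [norm_reflA]

/-! ### measurability -/

lemma parPart_congr_pt {A G : Rn n × Rn n → Cn n} {p : Rn n × Rn n} (h : A p = G p) :
    parPart A p = parPart G p := by
  rw [parPart, parPart, h]

lemma continuous_toC : Continuous (toC : Rn n → Cn n) := by
  unfold toC
  fun_prop

lemma measurable_comp_proj {α : Type*} [MeasurableSpace α] {G : α → Cn n}
    (hG : StronglyMeasurable G) (i : Fin n) : Measurable fun p => G p i :=
  ((PiLp.continuous_apply 2 _ i).comp_stronglyMeasurable hG).measurable

lemma sm_parPart {G : Rn n × Rn n → Cn n} (hG : StronglyMeasurable G) :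
    StronglyMeasurable (parPart G) := by
  have hdiag : MeasurableSet {p : Rn n × Rn n | p.1 = p.2} :=
    measurableSet_eq_fun measurable_fst measurable_snd
  have hsub : ∀ i : Fin n, Measurable fun p : Rn n × Rn n => ((p.1 - p.2) i : ℂ) := by
    intro i
    exact (by fun_prop : Continuous fun p : Rn n × Rn n => ((p.1 - p.2) i : ℂ)).measurable
  have hc : Measurable fun p : Rn n × Rn n =>
      cdotR (G p) (p.1 - p.2) / ((‖p.1 - p.2‖ : ℂ)) ^ 2 := by
    apply Measurable.div
    · simp only [cdotR]
      exact Finset.measurable_sum _ fun i _ => (measurable_comp_proj hG i).mul (hsub i)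
    · exact (Complex.measurable_ofReal.comp
        ((measurable_fst.sub measurable_snd).norm)).pow_const 2
  have hco : StronglyMeasurable fun p : Rn n × Rn n =>
      (cdotR (G p) (p.1 - p.2) / ((‖p.1 - p.2‖ : ℂ)) ^ 2) • toC (p.1 - p.2) :=
    hc.stronglyMeasurable.smul
      ((continuous_toC.comp (continuous_fst.sub continuous_snd)).stronglyMeasurable)
  exact StronglyMeasurable.ite hdiag hG hco

lemma aesm_parPart {A : Rn n × Rn n → Cn n} (hA : AEStronglyMeasurable A volume) :
    AEStronglyMeasurable (parPart A) volume := by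
  obtain ⟨G, hG, hAG⟩ := hA
  refine ⟨parPart G, sm_parPart hG, ?_⟩
  filter_upwards [hAG] with p hp using parPart_congr_pt hp

lemma aesm_reflA {A : Rn n × Rn n → Cn n} (hA : AEStronglyMeasurable A volume) :
    AEStronglyMeasurable (reflA A) volume :=
  ((aesm_parPart hA).const_smul (2 : ℂ)).sub hA

/-! ### the explicit perpendicular perturbation (case of a.e. parallel `A`) -/

def fin0 {n : ℕ} (hn : 2 ≤ n) : Fin n := ⟨0, by omega⟩
def fin1 {n : ℕ} (hn : 2 ≤ n) : Fin n := ⟨1, by omega⟩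

lemma fin0_ne_fin1 (hn : 2 ≤ n) : fin0 hn ≠ fin1 hn := by
  simp [fin0, fin1, Fin.ext_iff]

def vdir (hn : 2 ≤ n) (z : Rn n) : Rn n :=
  WithLp.toLp 2 (fun i => if i = fin0 hn then -(z (fin1 hn)) else if i = fin1 hn then z (fin0 hn) else 0)

lemma vdir_apply_ne (hn : 2 ≤ n) (z : Rn n) {i : Fin n} (h0 : i ≠ fin0 hn) (h1 : i ≠ fin1 hn) :
    vdir hn z i = 0 := by simp [vdir, h0, h1]

lemma vdir_dot (hn : 2 ≤ n) (z : Rn n) : ∑ i, vdir hn z i * z i = 0 := by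
  rw [← Finset.sum_subset (Finset.subset_univ {fin0 hn, fin1 hn})
    (fun i _ hi => ?_)]
  · rw [Finset.sum_pair (fin0_ne_fin1 hn)]
    simp [vdir, fin0_ne_fin1 hn, (fin0_ne_fin1 hn).symm]
    ring
  · simp only [Finset.mem_insert, Finset.mem_singleton, not_or] at hi
    rw [vdir_apply_ne hn z hi.1 hi.2, zero_mul]

lemma vdir_neg (hn : 2 ≤ n) (z : Rn n) : vdir hn (-z) = -vdir hn z := by
  ext i
  simp only [vdir, PiLp.neg_apply, PiLp.toLp_apply]
  split_ifs <;> ring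

lemma norm_vdir_le (hn : 2 ≤ n) (z : Rn n) : ‖vdir hn z‖ ≤ ‖z‖ := by
  rw [EuclideanSpace.norm_eq, EuclideanSpace.norm_eq]
  apply Real.sqrt_le_sqrt
  have h1 : ∑ i, ‖vdir hn z i‖ ^ 2 = ∑ i ∈ ({fin0 hn, fin1 hn} : Finset (Fin n)),
      ‖vdir hn z i‖ ^ 2 := by
    refine (Finset.sum_subset (Finset.subset_univ _) (fun i _ hi => ?_)).symm
    simp only [Finset.mem_insert, Finset.mem_singleton, not_or] at hi
    rw [vdir_apply_ne hn z hi.1 hi.2]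
    simp
  rw [h1, Finset.sum_pair (fin0_ne_fin1 hn)]
  have h2 : ‖vdir hn z (fin0 hn)‖ ^ 2 + ‖vdir hn z (fin1 hn)‖ ^ 2 =
      ∑ i ∈ ({fin0 hn, fin1 hn} : Finset (Fin n)), ‖z i‖ ^ 2 := by
    rw [Finset.sum_pair (fin0_ne_fin1 hn)]
    simp [vdir, fin0_ne_fin1 hn, (fin0_ne_fin1 hn).symm, Real.norm_eq_abs, sq_abs]
    ring
  rw [h2]
  exact Finset.sum_le_sum_of_subset_of_nonneg (Finset.subset_univ _)
    (fun i _ _ => by positivity)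

def omg {n : ℕ} (hn : 2 ≤ n) (z : Rn n) : ℂ :=
  if 1 < ‖z‖ ∧ ‖z‖ < 2 then
    (if 0 < z (fin0 hn) then 1 else if z (fin0 hn) < 0 then Complex.I else 0)
  else 0

lemma norm_omg_le (hn : 2 ≤ n) (z : Rn n) : ‖omg hn z‖ ≤ 1 := by
  rw [omg]
  split_ifs <;> simp [Complex.norm_I]

lemma omg_sq_neg (hn : 2 ≤ n) (z : Rn n) : (omg hn (-z)) ^ 2 = -(omg hn z) ^ 2 := by
  have hz : (-z) (fin0 hn) = -(z (fin0 hn)) := rfl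
  rw [omg, omg, norm_neg, hz]
  by_cases hsh : 1 < ‖z‖ ∧ ‖z‖ < 2
  · rw [if_pos hsh, if_pos hsh]
    rcases lt_trichotomy (z (fin0 hn)) 0 with h | h | h
    · rw [if_pos (show 0 < -z (fin0 hn) by linarith),
        if_neg (show ¬ 0 < z (fin0 hn) by linarith), if_pos h, Complex.I_sq]
      norm_num
    · rw [h]
      norm_num
    · rw [if_neg (show ¬ 0 < -z (fin0 hn) by linarith),
        if_pos (show -z (fin0 hn) < 0 by linarith), if_pos h, Complex.I_sq]
      norm_num
  · rw [if_neg hsh, if_neg hsh]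
    norm_num

def Bg (hn : 2 ≤ n) : Rn n × Rn n → Cn n :=
  fun p => (if ‖p.1‖ < 1 then omg hn (p.2 - p.1) else 0) • toC (vdir hn (p.2 - p.1))

def Phi (hn : 2 ≤ n) (z : Rn n) : ℂ := (omg hn z) ^ 2 * ((‖vdir hn z‖ : ℂ)) ^ 2

lemma Phi_neg (hn : 2 ≤ n) (z : Rn n) : Phi hn (-z) = -Phi hn z := by
  rw [Phi, Phi, omg_sq_neg, vdir_neg, norm_neg]
  ring

lemma cdotR_toC_eq (v w : Rn n) : cdotR (toC v) w = ((∑ i, v i * w i : ℝ) : ℂ) := by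
  rw [cdotR]
  push_cast
  rfl

lemma cdotR_Bg_sub' (hn : 2 ≤ n) (p : Rn n × Rn n) : cdotR (Bg hn p) (p.2 - p.1) = 0 := by
  rw [Bg, cdotR_smul_left, cdotR_toC_eq, vdir_dot]
  simp

lemma cdotR_Bg_sub (hn : 2 ≤ n) (p : Rn n × Rn n) : cdotR (Bg hn p) (p.1 - p.2) = 0 := by
  have e : p.1 - p.2 = -(p.2 - p.1) := by abel
  rw [e, cdotR_neg_right, cdotR_Bg_sub' hn p, neg_zero]

lemma Bg_diag (hn : 2 ≤ n) (x : Rn n) : Bg hn (x, x) = 0 := by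
  rw [Bg]
  have h0 : omg hn ((x, x).2 - (x, x).1) = 0 := by
    rw [omg, if_neg]
    simp
  rw [h0, ite_self, zero_smul]

lemma cdot_Bg_self (hn : 2 ≤ n) (p : Rn n × Rn n) :
    cdot (Bg hn p) (Bg hn p) = if ‖p.1‖ < 1 then Phi hn (p.2 - p.1) else 0 := by
  rw [Bg, cdot_smul_left, cdot_smul_right, cdot_toC_right, cdotR_toC_self, Phi]
  split_ifs <;> ring

lemma Bg_support (hn : 2 ≤ n) (p : Rn n × Rn n) (h : Bg hn p ≠ 0) :
    ‖p.1‖ < 1 ∧ 1 < ‖p.2 - p.1‖ ∧ ‖p.2 - p.1‖ < 2 ∧ ‖p.2‖ < 3 := by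
  by_cases h1 : ‖p.1‖ < 1
  · by_cases hsh : 1 < ‖p.2 - p.1‖ ∧ ‖p.2 - p.1‖ < 2
    · have hn2 : ‖p.2‖ < 3 := by
        have h3 : ‖p.2‖ ≤ ‖p.2 - p.1‖ + ‖p.1‖ := by
          calc ‖p.2‖ = ‖p.2 - p.1 + p.1‖ := by rw [sub_add_cancel]
          _ ≤ _ := norm_add_le _ _
        linarith [hsh.2]
      exact ⟨h1, hsh.1, hsh.2, hn2⟩
    · exfalso
      apply h
      rw [Bg, omg, if_neg hsh, ite_self, zero_smul]
  · exfalso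
    apply h
    rw [Bg, if_neg h1, zero_smul]

lemma norm_Bg_le2 (hn : 2 ≤ n) (p : Rn n × Rn n) : ‖Bg hn p‖ ≤ 2 := by
  by_cases h : Bg hn p = 0
  · rw [h]; simp
  · obtain ⟨h1, hsh1, hsh2, _⟩ := Bg_support hn p h
    rw [Bg, norm_smul, norm_toC]
    calc ‖if ‖p.1‖ < 1 then omg hn (p.2 - p.1) else 0‖ * ‖vdir hn (p.2 - p.1)‖
        ≤ 1 * 2 := by
          apply mul_le_mul _ ((norm_vdir_le hn _).trans hsh2.le) (norm_nonneg _) zero_le_one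
          rw [if_pos h1]
          exact norm_omg_le hn _
      _ = 2 := one_mul 2

lemma measurable_omg (hn : 2 ≤ n) : Measurable (omg hn) := by
  have h1 : MeasurableSet {z : Rn n | 1 < ‖z‖ ∧ ‖z‖ < 2} :=
    (measurableSet_lt measurable_const measurable_norm).inter
      (measurableSet_lt measurable_norm measurable_const)
  have hev : Measurable fun z : Rn n => z (fin0 hn) :=
    (PiLp.continuous_apply 2 _ (fin0 hn)).measurable
  have h2 : MeasurableSet {z : Rn n | 0 < z (fin0 hn)} :=
    measurableSet_lt measurable_const hev
  have h3 : MeasurableSet {z : Rn n | z (fin0 hn) < 0} :=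
    measurableSet_lt hev measurable_const
  exact Measurable.ite h1
    (Measurable.ite h2 measurable_const (Measurable.ite h3 measurable_const measurable_const))
    measurable_const

lemma continuous_vdir (hn : 2 ≤ n) : Continuous (vdir hn) := by
  show Continuous fun z : Rn n => WithLp.toLp 2 (fun i => if i = fin0 hn then -(z (fin1 hn))
    else if i = fin1 hn then z (fin0 hn) else 0)
  refine (PiLp.continuous_toLp 2 _).comp (continuous_pi fun i => ?_)
  by_cases h0 : i = fin0 hn
  · simp only [vdir, h0, if_pos rfl]
    exact (PiLp.continuous_apply 2 _ _).neg
  · by_cases h1 : i = fin1 hn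
    · simp only [vdir, h0, h1, if_neg (h1 ▸ (fin0_ne_fin1 hn).symm), if_false, if_pos rfl]
      exact PiLp.continuous_apply 2 _ _
    · simp only [vdir, h0, h1, if_false]
      exact continuous_const
  
lemma sm_Bg (hn : 2 ≤ n) : StronglyMeasurable (Bg hn) := by
  have hsc : Measurable fun p : Rn n × Rn n =>
      (if ‖p.1‖ < 1 then omg hn (p.2 - p.1) else 0) := by
    refine Measurable.ite ?_ ((measurable_omg hn).comp (measurable_snd.sub measurable_fst))
      measurable_const
    exact measurableSet_lt measurable_fst.norm measurable_const
  exact hsc.stronglyMeasurable.smul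
    ((continuous_toC.comp ((continuous_vdir hn).comp
      (continuous_snd.sub continuous_fst))).stronglyMeasurable)

lemma cdot_parPart_Bg (hn : 2 ≤ n) (A : Rn n × Rn n → Cn n) (p : Rn n × Rn n) :
    cdot (parPart A p) (Bg hn p) = 0 := by
  by_cases h : p.1 = p.2
  · obtain ⟨x, y⟩ := p
    cases h
    rw [Bg_diag, cdot_zero_right]
  · rw [parPart, if_neg h, cdot_smul_left, cdot_toC_left, cdotR_Bg_sub, mul_zero]

lemma cdot_Bg_parPart (hn : 2 ≤ n) (A : Rn n × Rn n → Cn n) (p : Rn n × Rn n) :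
    cdot (Bg hn p) (parPart A p) = 0 := by
  rw [cdot_comm]
  exact cdot_parPart_Bg hn A p

lemma integrand_Bg {s : ℝ} {A : Rn n × Rn n → Cn n} (hn : 2 ≤ n) {u v : Rn n → ℂ}
    {p : Rn n × Rn n} (hA : A p = parPart A p) :
    cdot (gradA s (fun q => A q + Bg hn q) u p) (gradA s (fun q => A q + Bg hn q) v p)
      = cdot (gradA s A u p) (gradA s A v p)
        + cdot (Bg hn p) (Bg hn p) * u p.1 * v p.1 := by
  have hAB : cdot (A p) (Bg hn p) = 0 := by rw [hA]; exact cdot_parPart_Bg hn A p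
  have hBA : cdot (Bg hn p) (A p) = 0 := by rw [hA]; exact cdot_Bg_parPart hn A p
  have f1 : cdotR (Bg hn p) (p.2 - p.1) = 0 := cdotR_Bg_sub' hn p
  simp only [gradA, gradS, alphaK, cdot_add_left, cdot_add_right, cdot_smul_left,
    cdot_smul_right, cdot_toC_left, cdot_toC_right, cdotR_add_left, cdotR_smul_left,
    cdotR_toC_self, hAB, hBA, f1]
  ring

lemma parPart_symPart_Bg (hn : 2 ≤ n) (A : Rn n × Rn n → Cn n) :
    parPart (symPart (fun q => A q + Bg hn q)) = parPart (symPart A) := by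
  refine parPart_eq_of_cdotR (fun x => ?_) (fun p => ?_)
  · rw [symPart, symPart]
    simp only [Bg_diag hn x, add_zero]
  · rw [symPart, symPart, cdotR_smul_left, cdotR_smul_left, cdotR_add_left, cdotR_add_left,
      cdotR_add_left, cdotR_add_left, cdotR_Bg_sub hn p]
    have e2 : cdotR (Bg hn (p.2, p.1)) (p.1 - p.2) = 0 := cdotR_Bg_sub' hn (p.2, p.1)
    simp only [cdotR_Bg_sub hn p, e2]
    ring

lemma parPart_antiPart_Bg (hn : 2 ≤ n) (A : Rn n × Rn n → Cn n) :
    parPart (antiPart (fun q => A q + Bg hn q)) = parPart (antiPart A) := by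
  refine parPart_eq_of_cdotR (fun x => ?_) (fun p => ?_)
  · rw [antiPart, antiPart, symPart, symPart]
    simp only [Bg_diag hn x, add_zero]
  · rw [antiPart, antiPart, cdotR_sub_left, cdotR_sub_left, cdotR_add_left, cdotR_Bg_sub hn p,
      symPart, symPart, cdotR_smul_left, cdotR_smul_left, cdotR_add_left, cdotR_add_left,
      cdotR_add_left, cdotR_add_left]
    have e2 : cdotR (Bg hn (p.2, p.1)) (p.1 - p.2) = 0 := cdotR_Bg_sub' hn (p.2, p.1)
    simp only [cdotR_Bg_sub hn p, e2]
    ring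

lemma memL2_Bg (hn : 2 ≤ n) : MemLp (Bg hn) 2 volume := by
  have hS : MeasurableSet ((Metric.ball (0 : Rn n) 1) ×ˢ (Metric.ball (0 : Rn n) 3)) :=
    (measurableSet_ball).prod measurableSet_ball
  have hfin : volume ((Metric.ball (0 : Rn n) 1) ×ˢ (Metric.ball (0 : Rn n) 3)) ≠ ⊤ := by
    rw [Measure.volume_eq_prod, Measure.prod_prod]
    exact (ENNReal.mul_lt_top measure_ball_lt_top measure_ball_lt_top).ne
  have hind : MemLp (((Metric.ball (0 : Rn n) 1) ×ˢ (Metric.ball (0 : Rn n) 3)).indicator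
      (fun _ => (2 : ℝ))) 2 volume := memLp_indicator_const 2 hS _ (Or.inr hfin)
  refine hind.of_le (sm_Bg hn).aestronglyMeasurable (Filter.Eventually.of_forall fun p => ?_)
  by_cases h : Bg hn p = 0
  · rw [h, norm_zero]
    exact norm_nonneg _
  · obtain ⟨h1, _, _, h4⟩ := Bg_support hn p h
    have hmem : p ∈ (Metric.ball (0 : Rn n) 1) ×ˢ (Metric.ball (0 : Rn n) 3) := by
      constructor
      · exact mem_ball_zero_iff.mpr h1
      · exact mem_ball_zero_iff.mpr h4
    rw [Set.indicator_of_mem hmem]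
    calc ‖Bg hn p‖ ≤ 2 := norm_Bg_le2 hn p
      _ ≤ ‖(2 : ℝ)‖ := by norm_num

lemma Bg_ne_ae_zero (hn : 2 ≤ n) : ¬ (Bg hn =ᵐ[volume] fun _ => (0 : Cn n)) := by
  intro hcon
  set U : Set (Rn n × Rn n) := {p | ‖p.1‖ < 1 ∧ 1 < ‖p.2 - p.1‖ ∧ ‖p.2 - p.1‖ < 2 ∧
      0 < (p.2 - p.1) (fin0 hn)} with hU
  have hUopen : IsOpen U := by
    refine IsOpen.inter (isOpen_lt continuous_fst.norm continuous_const) ?_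
    refine IsOpen.inter (isOpen_lt continuous_const (continuous_snd.sub continuous_fst).norm) ?_
    refine IsOpen.inter (isOpen_lt (continuous_snd.sub continuous_fst).norm continuous_const) ?_
    exact isOpen_lt continuous_const ((PiLp.continuous_apply 2 _ _).comp (continuous_snd.sub continuous_fst))
  have hptz : ∃ z : Rn n, ‖z‖ = 3/2 ∧ 0 < z (fin0 hn) := by
    refine ⟨WithLp.toLp 2 (fun i => if i = fin0 hn then (3/2 : ℝ) else 0), ?_, by simp⟩
    rw [EuclideanSpace.norm_eq]
    have : ∑ i, ‖(if i = fin0 hn then (3/2 : ℝ) else 0)‖ ^ 2 = (3/2 : ℝ)^2 := by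
      rw [Finset.sum_eq_single (fin0 hn)]
      · simp
      · intro b _ hb
        simp [hb]
      · simp
    rw [this, Real.sqrt_sq (by norm_num)]
  obtain ⟨z, hz1, hz2⟩ := hptz
  have hUne : U.Nonempty := by
    refine ⟨(0, z), ?_, ?_, ?_, ?_⟩ <;> simp [hz1, hz2] <;> norm_num
  have hUpos : 0 < volume U := hUopen.measure_pos volume hUne
  have hBne : ∀ p ∈ U, Bg hn p ≠ 0 := by
    intro p hp hzero
    obtain ⟨hp1, hp2, hp3, hp4⟩ := hp
    have hsc : (if ‖p.1‖ < 1 then omg hn (p.2 - p.1) else 0) = 1 := by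
      rw [if_pos hp1, omg, if_pos ⟨hp2, hp3⟩, if_pos hp4]
    rw [Bg, hsc, one_smul] at hzero
    have := congrArg (fun v : Cn n => v (fin1 hn)) hzero
    simp only [toC] at this
    rw [vdir] at this
    simp [if_neg (fin0_ne_fin1 hn).symm] at this
    exact absurd this (by rw [← Complex.ofReal_sub, Complex.ofReal_eq_zero]; simpa using ne_of_gt hp4)
  have h0 : volume {p : Rn n × Rn n | ¬ Bg hn p = 0} = 0 := ae_iff.mp hcon
  have hsub : U ⊆ {p : Rn n × Rn n | ¬ Bg hn p = 0} := fun p hp => hBne p hp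
  exact (ne_of_gt hUpos) (measure_mono_null hsub h0)

/-! ### integral lemmas for the perturbation -/

lemma memL2_of_memHs {s : ℝ} {u : Rn n → ℂ} (hu : MemHs s u) : MemLp u 2 volume := by
  refine ⟨hu.1, ?_⟩
  rw [eLpNorm_eq_lintegral_rpow_enorm_toReal two_ne_zero ENNReal.ofNat_ne_top]
  simp only [enorm_eq_nnnorm]
  have hfin : (∫⁻ x : Rn n, (‖u x‖₊ : ℝ≥0∞) ^ 2) < ⊤ :=
    lt_of_le_of_lt le_self_add hu.2
  have he : (∫⁻ x : Rn n, (‖u x‖₊ : ℝ≥0∞) ^ ENNReal.toReal 2) =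
      (∫⁻ x : Rn n, (‖u x‖₊ : ℝ≥0∞) ^ 2) := by
    refine lintegral_congr fun x => ?_
    rw [ENNReal.toReal_ofNat]
    rw [show ((2 : ℝ) : ℝ) = ((2 : ℕ) : ℝ) by norm_num, ENNReal.rpow_natCast]
  rw [he]
  exact ENNReal.rpow_lt_top_of_nonneg (by norm_num) hfin.ne

lemma measurable_Phi (hn : 2 ≤ n) : Measurable (Phi hn) := by
  apply Measurable.mul
  · exact (measurable_omg hn).pow_const 2
  · exact ((Complex.measurable_ofReal.comp
      ((continuous_vdir hn).norm.measurable)).pow_const 2)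

lemma norm_Phi_le (hn : 2 ≤ n) (z : Rn n) :
    ‖Phi hn z‖ ≤ (Metric.ball (0 : Rn n) 2).indicator (fun _ => (4 : ℝ)) z := by
  by_cases hsh : 1 < ‖z‖ ∧ ‖z‖ < 2
  · have hz : z ∈ Metric.ball (0 : Rn n) 2 := mem_ball_zero_iff.mpr hsh.2
    rw [Set.indicator_of_mem hz, Phi, norm_mul, norm_pow, norm_pow]
    have h1 : ‖omg hn z‖ ≤ 1 := norm_omg_le hn z
    have h2 : ‖((‖vdir hn z‖ : ℂ))‖ ≤ 2 := by
      rw [Complex.norm_real, Real.norm_eq_abs, _root_.abs_of_nonneg (norm_nonneg _)]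
      exact (norm_vdir_le hn z).trans hsh.2.le
    calc ‖omg hn z‖ ^ 2 * ‖((‖vdir hn z‖ : ℂ))‖ ^ 2 ≤ 1 ^ 2 * 2 ^ 2 := by
          apply mul_le_mul (pow_le_pow_left₀ (norm_nonneg _) h1 2)
            (pow_le_pow_left₀ (norm_nonneg _) h2 2) (by positivity) (by norm_num)
      _ = 4 := by norm_num
  · have h0 : omg hn z = 0 := by rw [omg, if_neg hsh]
    rw [Phi, h0]
    simp
    exact Set.indicator_nonneg (fun _ _ => by norm_num) z

lemma integrable_Phi (hn : 2 ≤ n) : Integrable (Phi hn) volume := by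
  refine Integrable.mono' ?_ (measurable_Phi hn).aestronglyMeasurable
    (Filter.Eventually.of_forall (norm_Phi_le hn))
  exact (integrableOn_const measure_ball_lt_top.ne).integrable_indicator
    measurableSet_ball

lemma integral_Phi_zero (hn : 2 ≤ n) : ∫ z : Rn n, Phi hn z = 0 := by
  have h1 : ∫ z : Rn n, Phi hn (-z) = ∫ z : Rn n, Phi hn z := integral_neg_eq_self _ _
  have h2 : ∫ z : Rn n, Phi hn (-z) = ∫ z : Rn n, -(Phi hn z) := by
    refine integral_congr_ae (Filter.Eventually.of_forall fun z => ?_)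
    show Phi hn (-z) = -Phi hn z
    exact Phi_neg hn z
  rw [h2, integral_neg] at h1
  linear_combination (-1/2 : ℂ) * h1

lemma integral_slice_Bg (hn : 2 ≤ n) (x : Rn n) :
    ∫ y : Rn n, cdot (Bg hn (x, y)) (Bg hn (x, y)) = 0 := by
  have he : ∀ y : Rn n, cdot (Bg hn (x, y)) (Bg hn (x, y)) =
      if ‖x‖ < 1 then Phi hn (y - x) else 0 := fun y => cdot_Bg_self hn (x, y)
  rw [integral_congr_ae (Filter.Eventually.of_forall he)]
  by_cases h : ‖x‖ < 1
  · simp only [if_pos h]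
    rw [integral_sub_right_eq_self (Phi hn) x]
    exact integral_Phi_zero hn
  · simp only [if_neg h]
    exact integral_zero _ _

lemma integral_eq_of_ae_add {g₁ g₂ h : Rn n × Rn n → ℂ} (hae : g₂ =ᵐ[volume] g₁ + h)
    (hInt : Integrable h volume) (h0 : (∫ p, h p) = 0) : (∫ p, g₂ p) = ∫ p, g₁ p := by
  rw [integral_congr_ae hae]
  by_cases H : Integrable g₁ volume
  · simp only [Pi.add_apply]
    rw [integral_add H hInt, h0, add_zero]
  · have H2 : ¬ Integrable (g₁ + h) volume := by
      intro Hc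
      exact H ((Hc.sub hInt).congr (Filter.Eventually.of_forall fun p => by simp))
    rw [integral_undef H2, integral_undef H]

lemma measurable_cdot_Bg (hn : 2 ≤ n) :
    Measurable fun p : Rn n × Rn n => cdot (Bg hn p) (Bg hn p) := by
  simp only [cdot]
  exact Finset.measurable_sum _ fun i _ =>
    (measurable_comp_proj (sm_Bg hn) i).mul (measurable_comp_proj (sm_Bg hn) i)

lemma norm_cdot_Bg_le (hn : 2 ≤ n) (p : Rn n × Rn n) :
    ‖cdot (Bg hn p) (Bg hn p)‖ ≤ (Metric.ball (0 : Rn n) 3).indicator (fun _ => (4 : ℝ)) p.2 := by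
  by_cases h : Bg hn p = 0
  · rw [h, cdot_zero_left, norm_zero]
    exact Set.indicator_nonneg (fun _ _ => by norm_num) _
  · obtain ⟨h1, hs1, hs2, h4⟩ := Bg_support hn p h
    rw [Set.indicator_of_mem (mem_ball_zero_iff.mpr h4), cdot_Bg_self, if_pos h1]
    refine (norm_Phi_le hn _).trans ?_
    by_cases hm : (p.2 - p.1) ∈ Metric.ball (0 : Rn n) 2
    · rw [Set.indicator_of_mem hm]
    · rw [Set.indicator_of_notMem hm]
      norm_num

lemma hfun_integrable (hn : 2 ≤ n) {u v : Rn n → ℂ} (hu : MemLp u 2 volume)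
    (hv : MemLp v 2 volume) :
    Integrable (fun p : Rn n × Rn n => cdot (Bg hn p) (Bg hn p) * u p.1 * v p.1) volume := by
  have huf : AEStronglyMeasurable (fun p : Rn n × Rn n => u p.1) volume := by
    rw [Measure.volume_eq_prod]; exact hu.1.comp_fst
  have hvf : AEStronglyMeasurable (fun p : Rn n × Rn n => v p.1) volume := by
    rw [Measure.volume_eq_prod]; exact hv.1.comp_fst
  have haesm : AEStronglyMeasurable
      (fun p : Rn n × Rn n => cdot (Bg hn p) (Bg hn p) * u p.1 * v p.1) volume :=
    (((measurable_cdot_Bg hn).aestronglyMeasurable.mul huf).mul hvf)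
  have h2u : Integrable (fun x => ‖u x‖ ^ 2) volume :=
    (memLp_two_iff_integrable_sq_norm hu.1).mp hu
  have h2v : Integrable (fun x => ‖v x‖ ^ 2) volume :=
    (memLp_two_iff_integrable_sq_norm hv.1).mp hv
  have hF : Integrable (fun x : Rn n => ‖u x‖ * ‖v x‖) volume := by
    refine Integrable.mono' (h2u.add h2v) (hu.1.norm.mul hv.1.norm)
      (Filter.Eventually.of_forall fun x => ?_)
    rw [Real.norm_eq_abs, _root_.abs_of_nonneg (by positivity), Pi.add_apply]
    nlinarith [norm_nonneg (u x), norm_nonneg (v x), sq_nonneg (‖u x‖ - ‖v x‖)]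
  have hG : Integrable ((Metric.ball (0 : Rn n) 3).indicator (fun _ => (4 : ℝ))) volume :=
    (integrableOn_const measure_ball_lt_top.ne).integrable_indicator
      measurableSet_ball
  have hFG : Integrable (fun p : Rn n × Rn n =>
      (‖u p.1‖ * ‖v p.1‖) * (Metric.ball (0 : Rn n) 3).indicator (fun _ => (4 : ℝ)) p.2)
      volume := by
    rw [Measure.volume_eq_prod]; exact hF.mul_prod hG
  refine Integrable.mono' hFG haesm (Filter.Eventually.of_forall fun p => ?_)
  calc ‖cdot (Bg hn p) (Bg hn p) * u p.1 * v p.1‖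
      = ‖cdot (Bg hn p) (Bg hn p)‖ * ‖u p.1‖ * ‖v p.1‖ := by rw [norm_mul, norm_mul]
    _ ≤ (Metric.ball (0 : Rn n) 3).indicator (fun _ => (4 : ℝ)) p.2 * ‖u p.1‖ * ‖v p.1‖ := by
        have := norm_cdot_Bg_le hn p
        gcongr
    _ = (‖u p.1‖ * ‖v p.1‖) * (Metric.ball (0 : Rn n) 3).indicator (fun _ => (4 : ℝ)) p.2 := by
        ring

lemma hfun_integral_zero (hn : 2 ≤ n) {u v : Rn n → ℂ} (hu : MemLp u 2 volume)
    (hv : MemLp v 2 volume) :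
    (∫ p : Rn n × Rn n, cdot (Bg hn p) (Bg hn p) * u p.1 * v p.1) = 0 := by
  have hInt := hfun_integrable hn hu hv
  rw [Measure.volume_eq_prod] at hInt ⊢
  rw [integral_prod _ hInt]
  have hx : ∀ x : Rn n, (∫ y : Rn n, cdot (Bg hn (x, y)) (Bg hn (x, y)) * u x * v x) = 0 := by
    intro x
    have h1 : (fun y : Rn n => cdot (Bg hn (x, y)) (Bg hn (x, y)) * u x * v x) =
        fun y : Rn n => cdot (Bg hn (x, y)) (Bg hn (x, y)) * (u x * v x) :=
      funext fun y => by ring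
    rw [h1, integral_mul_const, integral_slice_Bg hn x, zero_mul]
  simp only [hx, integral_zero]

lemma gauge_case2 (hn : 2 ≤ n) {s : ℝ} {A : Rn n × Rn n → Cn n} {q : Rn n → ℝ}
    (hpar : parPart A =ᵐ[volume] A) :
    GaugeSim s A (fun p => A p + Bg hn p) q q := by
  intro u v hu hv
  rw [Bform, Bform]
  congr 1
  refine (integral_eq_of_ae_add ?_ (hfun_integrable hn (memL2_of_memHs hu)
    (memL2_of_memHs hv)) (hfun_integral_zero hn (memL2_of_memHs hu) (memL2_of_memHs hv))).symm
  filter_upwards [hpar] with p hp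
  exact integrand_Bg hn hp.symm

/-! ### slice lemmas and `J`-estimates -/

lemma lintegral_sq_lt_top {F : Rn n × Rn n → Cn n} (hF : MemLp F 2 volume)
    {G : Rn n × Rn n → Cn n} (hG : StronglyMeasurable G) (hFG : F =ᵐ[volume] G) :
    (∫⁻ p : Rn n × Rn n, (‖G p‖₊ : ℝ≥0∞) ^ 2) < ⊤ := by
  have h1 := hF.2
  rw [eLpNorm_congr_ae hFG, eLpNorm_eq_lintegral_rpow_enorm_toReal two_ne_zero ENNReal.ofNat_ne_top] at h1
  simp only [enorm_eq_nnnorm] at h1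
  have he : (∫⁻ p : Rn n × Rn n, (‖G p‖₊ : ℝ≥0∞) ^ ENNReal.toReal 2) =
      ∫⁻ p : Rn n × Rn n, (‖G p‖₊ : ℝ≥0∞) ^ 2 := by
    refine lintegral_congr fun p => ?_
    rw [ENNReal.toReal_ofNat, show ((2 : ℝ) : ℝ) = ((2 : ℕ) : ℝ) by norm_num,
      ENNReal.rpow_natCast]
  rw [he] at h1
  by_contra hcon
  rw [not_lt, top_le_iff] at hcon
  rw [hcon, ENNReal.top_rpow_of_pos (by rw [ENNReal.toReal_ofNat]; norm_num)] at h1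
  exact (lt_irrefl _ h1).elim

lemma slice_facts {F : Rn n × Rn n → Cn n} (hF : MemLp F 2 volume) :
    ∀ᵐ x : Rn n, AEStronglyMeasurable (fun y => F (x, y)) volume ∧
      Integrable (fun y => ‖F (x, y)‖ ^ 2) volume := by
  obtain ⟨G, hG, hFG⟩ := hF.1
  have hGm : Measurable fun p : Rn n × Rn n => (‖G p‖₊ : ℝ≥0∞) ^ 2 :=
    (hG.nnnorm.measurable.coe_nnreal_ennreal).pow_const 2
  have hGfin := lintegral_sq_lt_top hF hG hFG
  have h2 : ∀ᵐ x : Rn n, (∫⁻ y : Rn n, (‖G (x, y)‖₊ : ℝ≥0∞) ^ 2) < ⊤ := by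
    rw [Measure.volume_eq_prod, lintegral_prod _ hGm.aemeasurable] at hGfin
    exact ae_lt_top (Measurable.lintegral_prod_right' hGm) hGfin.ne
  have h3 : ∀ᵐ x : Rn n, (fun y => F (x, y)) =ᵐ[volume] fun y => G (x, y) := by
    have h := hFG
    rw [Measure.volume_eq_prod] at h
    exact Measure.ae_ae_of_ae_prod h
  filter_upwards [h2, h3] with x hx2 hx3
  have hGsm : StronglyMeasurable fun y => G (x, y) :=
    hG.comp_measurable measurable_prodMk_left
  refine ⟨⟨fun y => G (x, y), hGsm, hx3⟩, ?_⟩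
  have hGint : Integrable (fun y => ‖G (x, y)‖ ^ 2) volume := by
    refine ⟨(hGsm.norm.measurable.pow_const 2).stronglyMeasurable.aestronglyMeasurable, ?_⟩
    rw [HasFiniteIntegral]
    have he : ∀ y : Rn n, (‖(‖G (x, y)‖ ^ 2 : ℝ)‖₊ : ℝ≥0∞) = (‖G (x, y)‖₊ : ℝ≥0∞) ^ 2 := by
      intro y
      rw [nnnorm_pow, nnnorm_norm]
      push_cast
      rfl
    simp only [enorm_eq_nnnorm]
    rw [lintegral_congr he]
    exact hx2
  refine hGint.congr (hx3.symm.mono fun y hy => ?_)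
  show ‖G (x, y)‖ ^ 2 = ‖F (x, y)‖ ^ 2
  rw [show G (x, y) = F (x, y) from hy]

lemma memLp_J2_add {r : ℝ≥0∞} {F K : Rn n × Rn n → Cn n} {R1 R2 : ℝ}
    (hF : MemLp F 2 volume) (hK : StronglyMeasurable K)
    (hsq : ∀ᵐ p : Rn n × Rn n ∂volume, ‖F p + K p‖ ^ 2 ≤ ‖F p‖ ^ 2 + ‖K p‖ ^ 2)
    (hKb : ∀ p : Rn n × Rn n, ‖K p‖ ≤ (Metric.ball (0 : Rn n) R2).indicator
      (fun _ => (2 : ℝ)) p.2)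
    (hKx : ∀ p : Rn n × Rn n, p.1 ∉ Metric.ball (0 : Rn n) R1 → K p = 0)
    (hJ2F : MemLp (J2 F) r volume) :
    MemLp (J2 (fun p => F p + K p)) r volume := by
  set M : ℝ := 4 * (volume (Metric.ball (0 : Rn n) R2)).toReal with hM
  have hMnn : 0 ≤ M := by positivity
  set D : ℝ := Real.sqrt M with hD
  have hKsq : ∀ p : Rn n × Rn n, ‖K p‖ ^ 2 ≤ (Metric.ball (0 : Rn n) R2).indicator
      (fun _ => (4 : ℝ)) p.2 := by
    intro p
    have h := hKb p
    by_cases hm : p.2 ∈ Metric.ball (0 : Rn n) R2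
    · rw [Set.indicator_of_mem hm] at h ⊢
      nlinarith [norm_nonneg (K p)]
    · rw [Set.indicator_of_notMem hm] at h ⊢
      have : ‖K p‖ = 0 := le_antisymm h (norm_nonneg _)
      rw [this]
      norm_num
  have hind4 : Integrable ((Metric.ball (0 : Rn n) R2).indicator (fun _ => (4 : ℝ))) volume :=
    (integrableOn_const measure_ball_lt_top.ne).integrable_indicator measurableSet_ball
  have hKslice : ∀ x : Rn n, Integrable (fun y => ‖K (x, y)‖ ^ 2) volume ∧
      (∫ y : Rn n, ‖K (x, y)‖ ^ 2) ≤ M := by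
    intro x
    have hm : AEStronglyMeasurable (fun y => ‖K (x, y)‖ ^ 2) volume :=
      (((hK.comp_measurable measurable_prodMk_left).norm.measurable.pow_const
        2).stronglyMeasurable).aestronglyMeasurable
    have hi : Integrable (fun y => ‖K (x, y)‖ ^ 2) volume := by
      refine Integrable.mono' hind4 hm (Filter.Eventually.of_forall fun y => ?_)
      rw [Real.norm_eq_abs, _root_.abs_of_nonneg (by positivity)]
      exact hKsq (x, y)
    refine ⟨hi, ?_⟩
    calc (∫ y : Rn n, ‖K (x, y)‖ ^ 2)
        ≤ ∫ y : Rn n, (Metric.ball (0 : Rn n) R2).indicator (fun _ => (4 : ℝ)) y :=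
          integral_mono hi hind4 (fun y => hKsq (x, y))
      _ = M := by
          rw [integral_indicator_const (4 : ℝ) measurableSet_ball, smul_eq_mul, hM, mul_comm, measureReal_def]
  have hsq' : ∀ᵐ x : Rn n, ∀ᵐ y : Rn n, ‖F (x, y) + K (x, y)‖ ^ 2 ≤
      ‖F (x, y)‖ ^ 2 + ‖K (x, y)‖ ^ 2 := by
    have h := hsq
    rw [Measure.volume_eq_prod] at h
    exact Measure.ae_ae_of_ae_prod h
  have hmain : ∀ᵐ x : Rn n, J2 (fun p => F p + K p) x ≤
      J2 F x + (Metric.ball (0 : Rn n) R1).indicator (fun _ => D) x := by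
    filter_upwards [slice_facts hF, hsq'] with x hx hsqx
    obtain ⟨hxm, hxint⟩ := hx
    by_cases hx1 : x ∈ Metric.ball (0 : Rn n) R1
    · rw [Set.indicator_of_mem hx1]
      obtain ⟨hKi, hKle⟩ := hKslice x
      have h1 : (∫ y : Rn n, ‖F (x, y) + K (x, y)‖ ^ 2) ≤
          (∫ y : Rn n, ‖F (x, y)‖ ^ 2) + ∫ y : Rn n, ‖K (x, y)‖ ^ 2 := by
        calc (∫ y : Rn n, ‖F (x, y) + K (x, y)‖ ^ 2)
            ≤ ∫ y : Rn n, (‖F (x, y)‖ ^ 2 + ‖K (x, y)‖ ^ 2) :=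
              integral_mono_of_nonneg (Filter.Eventually.of_forall fun y => by positivity)
                (hxint.add hKi) hsqx
          _ = _ := integral_add hxint hKi
      have hFnn : 0 ≤ ∫ y : Rn n, ‖F (x, y)‖ ^ 2 :=
        integral_nonneg fun y => by positivity
      have hJF : (J2 F x) ^ 2 = ∫ y : Rn n, ‖F (x, y)‖ ^ 2 := Real.sq_sqrt hFnn
      have hDsq : D ^ 2 = M := Real.sq_sqrt hMnn
      calc J2 (fun p => F p + K p) x
          = Real.sqrt (∫ y : Rn n, ‖F (x, y) + K (x, y)‖ ^ 2) := rfl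
        _ ≤ Real.sqrt ((J2 F x) ^ 2 + D ^ 2) := by
            apply Real.sqrt_le_sqrt
            rw [hJF, hDsq]
            linarith
        _ ≤ J2 F x + D := by
            have hJnn : 0 ≤ J2 F x := Real.sqrt_nonneg _
            have hDnn : 0 ≤ D := Real.sqrt_nonneg _
            refine (Real.sqrt_le_sqrt (show (J2 F x) ^ 2 + D ^ 2 ≤ (J2 F x + D) ^ 2 by
              nlinarith)).trans ?_
            rw [Real.sqrt_sq (by positivity)]
    · rw [Set.indicator_of_notMem hx1, add_zero]
      have hKz : ∀ y : Rn n, K (x, y) = 0 := fun y => hKx (x, y) hx1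
      have : J2 (fun p => F p + K p) x = J2 F x := by
        rw [J2, J2]
        congr 1
        refine integral_congr_ae (Filter.Eventually.of_forall fun y => ?_)
        show ‖F (x, y) + K (x, y)‖ ^ 2 = ‖F (x, y)‖ ^ 2
        rw [hKz y, add_zero]
      exact le_of_eq this
  have haesmJ : AEStronglyMeasurable (J2 (fun p => F p + K p)) volume := by
    obtain ⟨G, hG, hFG⟩ := hF.1
    refine ⟨J2 (fun p => G p + K p), ?_, ?_⟩
    · have hsm : StronglyMeasurable fun p : Rn n × Rn n => ‖G p + K p‖ ^ 2 :=
        (((hG.add hK).norm).measurable.pow_const 2).stronglyMeasurable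
      have hint : StronglyMeasurable fun x : Rn n =>
          ∫ y : Rn n, ‖G (x, y) + K (x, y)‖ ^ 2 := hsm.integral_prod_right'
      exact Real.continuous_sqrt.comp_stronglyMeasurable hint
    · have hae : ∀ᵐ x : Rn n, (fun y => F (x, y)) =ᵐ[volume] fun y => G (x, y) := by
        have h := hFG
        rw [Measure.volume_eq_prod] at h
        exact Measure.ae_ae_of_ae_prod h
      filter_upwards [hae] with x hxe
      rw [J2, J2]
      congr 1
      refine integral_congr_ae ?_
      filter_upwards [hxe] with y hy
      show ‖F (x, y) + K (x, y)‖ ^ 2 = ‖G (x, y) + K (x, y)‖ ^ 2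
      rw [hy]
  have hDind : MemLp ((Metric.ball (0 : Rn n) R1).indicator (fun _ => D)) r volume :=
    memLp_indicator_const r measurableSet_ball D (Or.inr measure_ball_lt_top.ne)
  refine (hJ2F.add hDind).of_le haesmJ ?_
  filter_upwards [hmain] with x hx
  have hnn : 0 ≤ J2 (fun p => F p + K p) x := Real.sqrt_nonneg _
  rw [Real.norm_eq_abs, _root_.abs_of_nonneg hnn]
  refine hx.trans ?_
  rw [Real.norm_eq_abs, Pi.add_apply]
  exact le_abs_self _

lemma pyth_pointwise (hn : 2 ≤ n) (A : Rn n × Rn n → Cn n) (p : Rn n × Rn n) :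
    ‖parPart A p + Bg hn p‖ ^ 2 = ‖parPart A p‖ ^ 2 + ‖Bg hn p‖ ^ 2 := by
  have hinner : (inner ℂ (parPart A p) (Bg hn p) : ℂ) = 0 := by
    by_cases h : p.1 = p.2
    · obtain ⟨x, y⟩ := p
      cases h
      rw [Bg_diag]
      exact inner_zero_right _
    · rw [parPart, if_neg h, inner_smul_left, ← cdotR_eq_inner, cdotR_Bg_sub hn p, mul_zero]
  rw [@norm_add_sq ℂ _ _ _ _ (parPart A p) (Bg hn p), hinner]
  simp

lemma measurePreserving_swap_vol :
    MeasurePreserving (Prod.swap : Rn n × Rn n → Rn n × Rn n) volume volume := by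
  rw [Measure.volume_eq_prod]
  exact Measure.measurePreserving_swap

lemma hsq_Bg (hn : 2 ≤ n) {A : Rn n × Rn n → Cn n} (hpar : parPart A =ᵐ[volume] A) :
    ∀ᵐ p : Rn n × Rn n ∂volume, ‖A p + Bg hn p‖ ^ 2 ≤ ‖A p‖ ^ 2 + ‖Bg hn p‖ ^ 2 := by
  filter_upwards [hpar] with p hp
  refine le_of_eq ?_
  calc ‖A p + Bg hn p‖ ^ 2 = ‖parPart A p + Bg hn p‖ ^ 2 := by rw [hp]
    _ = ‖parPart A p‖ ^ 2 + ‖Bg hn p‖ ^ 2 := pyth_pointwise hn A p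
    _ = ‖A p‖ ^ 2 + ‖Bg hn p‖ ^ 2 := by rw [hp]

lemma hsq_Bg_swap (hn : 2 ≤ n) {A : Rn n × Rn n → Cn n} (hpar : parPart A =ᵐ[volume] A) :
    ∀ᵐ p : Rn n × Rn n ∂volume, ‖A (p.2, p.1) + Bg hn (p.2, p.1)‖ ^ 2 ≤
      ‖A (p.2, p.1)‖ ^ 2 + ‖Bg hn (p.2, p.1)‖ ^ 2 := by
  have hpar' : (parPart A ∘ Prod.swap) =ᵐ[volume] (A ∘ Prod.swap) :=
    measurePreserving_swap_vol.quasiMeasurePreserving.ae_eq_comp hpar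
  filter_upwards [hpar'] with p hp
  have hp' : parPart A (p.2, p.1) = A (p.2, p.1) := hp
  refine le_of_eq ?_
  calc ‖A (p.2, p.1) + Bg hn (p.2, p.1)‖ ^ 2
      = ‖parPart A (p.2, p.1) + Bg hn (p.2, p.1)‖ ^ 2 := by rw [hp']
    _ = ‖parPart A (p.2, p.1)‖ ^ 2 + ‖Bg hn (p.2, p.1)‖ ^ 2 := pyth_pointwise hn A (p.2, p.1)
    _ = ‖A (p.2, p.1)‖ ^ 2 + ‖Bg hn (p.2, p.1)‖ ^ 2 := by rw [hp']

lemma norm_Bg_ind_snd (hn : 2 ≤ n) (p : Rn n × Rn n) :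
    ‖Bg hn p‖ ≤ (Metric.ball (0 : Rn n) 3).indicator (fun _ => (2 : ℝ)) p.2 := by
  by_cases h : Bg hn p = 0
  · rw [h, norm_zero]
    exact Set.indicator_nonneg (fun _ _ => by norm_num) _
  · rw [Set.indicator_of_mem (mem_ball_zero_iff.mpr (Bg_support hn p h).2.2.2)]
    exact norm_Bg_le2 hn p

lemma norm_Bg_swap_ind (hn : 2 ≤ n) (p : Rn n × Rn n) :
    ‖Bg hn (p.2, p.1)‖ ≤ (Metric.ball (0 : Rn n) 1).indicator (fun _ => (2 : ℝ)) p.2 := by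
  by_cases h : Bg hn (p.2, p.1) = 0
  · rw [h, norm_zero]
    exact Set.indicator_nonneg (fun _ _ => by norm_num) _
  · rw [Set.indicator_of_mem (mem_ball_zero_iff.mpr (Bg_support hn _ h).1)]
    exact norm_Bg_le2 hn _

lemma Bg_x_zero (hn : 2 ≤ n) (p : Rn n × Rn n) (hx : p.1 ∉ Metric.ball (0 : Rn n) 1) :
    Bg hn p = 0 := by
  rw [Bg, if_neg (fun h1 => hx (mem_ball_zero_iff.mpr h1)), zero_smul]

lemma Bg_swap_x_zero (hn : 2 ≤ n) (p : Rn n × Rn n) (hx : p.1 ∉ Metric.ball (0 : Rn n) 3) :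
    Bg hn (p.2, p.1) = 0 := by
  by_contra h
  exact hx (mem_ball_zero_iff.mpr (Bg_support hn _ h).2.2.2)

lemma memLp_J2_ABg (hn : 2 ≤ n) {r : ℝ≥0∞} {A : Rn n × Rn n → Cn n}
    (hA2 : MemLp A 2 volume) (hpar : parPart A =ᵐ[volume] A)
    (hJ2 : MemLp (J2 A) r volume) :
    MemLp (J2 (fun p => A p + Bg hn p)) r volume :=
  memLp_J2_add hA2 (sm_Bg hn) (hsq_Bg hn hpar) (norm_Bg_ind_snd hn)
    (fun p hx => Bg_x_zero hn p hx) hJ2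

lemma memLp_J1_ABg (hn : 2 ≤ n) {r : ℝ≥0∞} {A : Rn n × Rn n → Cn n}
    (hA2 : MemLp A 2 volume) (hpar : parPart A =ᵐ[volume] A)
    (hJ1 : MemLp (J1 A) r volume) :
    MemLp (J1 (fun p => A p + Bg hn p)) r volume := by
  have hAsw : MemLp (fun p : Rn n × Rn n => A (p.2, p.1)) 2 volume :=
    hA2.comp_measurePreserving measurePreserving_swap_vol
  have hKsm : StronglyMeasurable (fun p : Rn n × Rn n => Bg hn (p.2, p.1)) :=
    (sm_Bg hn).comp_measurable measurable_swap
  have hJ1' : MemLp (J2 (fun p : Rn n × Rn n => A (p.2, p.1))) r volume := hJ1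
  have h := memLp_J2_add hAsw hKsm (hsq_Bg_swap hn hpar) (norm_Bg_swap_ind hn)
    (fun p hx => Bg_swap_x_zero hn p hx) hJ1'
  exact h

end Aux
/-- FMSE has the gauge `∼`: for every `(A,q) ∈ 𝒫₀` with `A ∈ L²(ℝ^{2n})` not a.e.
zero, there is `(A',q') ∈ 𝒫₀` with `A' ≠ A` (as `L²` functions) and `(A,q) ∼ (A',q')`. -/
theorem statement10 (n : ℕ) (hn : 2 ≤ n) (s : ℝ) (hs : s ∈ Set.Ioo (0 : ℝ) 1)
    (Ω : Set (Rn n)) (hΩo : IsOpen Ω) (hΩb : Bornology.IsBounded Ω)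
    (A : Rn n × Rn n → Cn n) (q : Rn n → ℝ)
    (hA2 : MeasureTheory.MemLp A 2 MeasureTheory.volume) (hP : MemP0 s Ω A q)
    (hA0 : ¬ (A =ᵐ[MeasureTheory.volume] fun _ => (0 : Cn n))) :
    ∃ (A' : Rn n × Rn n → Cn n) (q' : Rn n → ℝ),
      MeasureTheory.MemLp A' 2 MeasureTheory.volume ∧ MemP0 s Ω A' q' ∧
      ¬ (A' =ᵐ[MeasureTheory.volume] A) ∧ GaugeSim s A A' q q' := by
  by_cases hpar : parPart A =ᵐ[MeasureTheory.volume] A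
  · -- `A` is a.e. parallel: add the explicit perpendicular perturbation
    obtain ⟨⟨⟨hJ1, hJ2⟩, hH2, hp3⟩, hq⟩ := hP
    refine ⟨fun p => A p + Bg hn p, q, ?_, ?_, ?_, ?_⟩
    · exact hA2.add (memL2_Bg hn)
    · refine ⟨⟨⟨?_, ?_⟩, ?_, ?_⟩, hq⟩
      · exact memLp_J1_ABg hn hA2 hpar hJ1
      · exact memLp_J2_ABg hn hA2 hpar hJ2
      · rw [parPart_symPart_Bg hn A]
        exact hH2
      · rw [parPart_antiPart_Bg hn A]
        exact hp3
    · intro hcon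
      apply Bg_ne_ae_zero hn
      filter_upwards [hcon] with p hp
      have hp' : A p + Bg hn p = A p := hp
      exact add_eq_left.mp hp'
    · exact gauge_case2 hn hpar
  · -- the perpendicular part of `A` is not a.e. zero: reflect it
    obtain ⟨⟨⟨hJ1, hJ2⟩, hH2, hp3⟩, hq⟩ := hP
    refine ⟨reflA A, q, ?_, ?_, ?_, ?_⟩
    · exact hA2.of_le (aesm_reflA hA2.1)
        (Filter.Eventually.of_forall fun p => le_of_eq (norm_reflA A p))
    · exact ⟨⟨⟨by rw [J1_reflA]; exact hJ1, by rw [J2_reflA]; exact hJ2⟩,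
        by rw [parPart_symPart_reflA]; exact hH2,
        by rw [parPart_antiPart_reflA]; exact hp3⟩, hq⟩
    · intro hcon
      apply hpar
      filter_upwards [hcon] with p hp
      have h2 : (2 : ℂ) • parPart A p = (2 : ℂ) • A p := by
        have : (2 : ℂ) • parPart A p - A p = A p := hp
        rw [sub_eq_iff_eq_add] at this
        rw [this, two_smul]
      exact smul_right_injective _ two_ne_zero h2
    · intro u v hu hv
      rw [Bform, Bform]
      congr 1
      have hfun : (fun p => cdot (gradA s (reflA A) u p) (gradA s (reflA A) v p)) =
          fun p => cdot (gradA s A u p) (gradA s A v p) :=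
        funext fun p => integrand_eq (cdotR_reflA_sub' A p) (cdot_reflA_self A p)
      rw [hfun]
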